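/- arXiv:2506.08607 — 5 statements merged into one kernel-verified Lean document; each statement's English description precedes it below -/
import Mathlib

section
/- Case (i) of Lemma 1: suppose event E holds (ρ(i) − ρ(j) ∈ [−B_t(j,i), B_t(i,j)] for all i,j), W_t is symmetric and nonnegative, b_t ∈ S*_m, and s_t ∉ S*_m, where S*_m is the set of top-m arms by true mean ρ. With gaps Δ(b_t) = ρ(b_t) − ρ_(m+1) and Δ(s_t) = ρ_(m) − ρ(s_t) (ρ_(m), ρ_(m+1) being the m-th and (m+1)-th largest true means), then B_t(s_t, b_t) ≤ −max(Δ(b_t), Δ(s_t)) + 3 W_t(b_t, s_t). -/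
/-- Case (i) of Lemma 1: b_t ∈ S*_m and s_t ∉ S*_m. -/
theorem stmt_7 {ι : Type*} [Fintype ι] [DecidableEq ι]
    (ρ ρhat : ι → ℝ) (W : ι → ι → ℝ) (B : ι → ι → ℝ)
    (hB : ∀ i j, B i j = ρhat i - ρhat j + W i j)
    (hWsymm : ∀ i j, W i j = W j i) (hWpos : ∀ i j, 0 ≤ W i j)
    (hE : ∀ i j, ρ i - ρ j ∈ Set.Icc (-(B j i)) (B i j))
    (S : Finset ι) (ρm ρm1 : ℝ)
    (hρm : ∀ a ∈ S, ρm ≤ ρ a) (hρm1 : ∀ a ∉ S, ρ a ≤ ρm1) (hmm1 : ρm1 ≤ ρm)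
    (b s : ι) (hb : b ∈ S) (hs : s ∉ S) :
    B s b ≤ -(max (ρ b - ρm1) (ρm - ρ s)) + 3 * W b s := by
  have h1 := (hE b s).2
  have hsb := hρm1 s hs
  have hbm := hρm b hb
  have hmax : max (ρ b - ρm1) (ρm - ρ s) ≤ ρ b - ρ s :=
    max_le (by linarith) (by linarith)
  have e1 := hB b s
  have e2 := hB s b
  have e3 := hWsymm s b
  have e4 := hWpos b s
  linarith
end

section
/- Case (ii) of Lemma 1: under event E, with symmetric nonnegative W_t, if b_t ∉ S*_m, s_t ∈ S*_m, and additionally ρ̂_t(b_t) ≥ ρ̂_t(s_t), then B_t(s_t, b_t) ≤ −max(Δ(b_t), Δ(s_t)) + 3 W_t(b_t, s_t), where Δ(s_t) = ρ(s_t) − ρ_(m+1) and Δ(b_t) = ρ_(m) − ρ(b_t). -/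
/-- Case (ii) of Lemma 1: b_t ∉ S*_m, s_t ∈ S*_m, and ρ̂_t(b_t) ≥ ρ̂_t(s_t). -/
theorem stmt_8 {ι : Type*} [Fintype ι] [DecidableEq ι]
    (ρ ρhat : ι → ℝ) (W : ι → ι → ℝ) (B : ι → ι → ℝ)
    (hB : ∀ i j, B i j = ρhat i - ρhat j + W i j)
    (hWsymm : ∀ i j, W i j = W j i) (hWpos : ∀ i j, 0 ≤ W i j)
    (hE : ∀ i j, ρ i - ρ j ∈ Set.Icc (-(B j i)) (B i j))
    (S : Finset ι) (ρm ρm1 : ℝ)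
    (hρm : ∀ a ∈ S, ρm ≤ ρ a) (hρm1 : ∀ a ∉ S, ρ a ≤ ρm1) (hmm1 : ρm1 ≤ ρm)
    (b s : ι) (hb : b ∉ S) (hs : s ∈ S) (hhat : ρhat s ≤ ρhat b) :
    B s b ≤ -(max (ρm - ρ b) (ρ s - ρm1)) + 3 * W b s := by
  have hE2 := (hE s b).2
  have hBsb := hB s b
  have hsym := hWsymm s b
  have hWp := hWpos b s
  have h1 := hρm s hs
  have h2 := hρm1 b hb
  have hM : max (ρm - ρ b) (ρ s - ρm1) ≤ W b s :=
    max_le (by linarith) (by linarith)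
  linarith
end

section
/- Case (iii) of Lemma 1: under event E with symmetric nonnegative W_t, suppose b_t ∉ S*_m, s_t ∉ S*_m, B_t(s_t,b_t) ≤ W_t(b_t,s_t), and there exists b ∈ S*_m with B_t(s_t,b_t) ≥ B_t(b,b_t). Then B_t(s_t,b_t) ≥ Δ(b_t) and B_t(s_t, b_t) ≤ −max(Δ(b_t), Δ(s_t)) + 3 W_t(b_t, s_t), where Δ(a) = ρ_(m) − ρ(a) for a ∉ S*_m. -/
/-- Case (iii) of Lemma 1: b_t ∉ S*_m and s_t ∉ S*_m. -/
theorem stmt_9 {ι : Type*} [Fintype ι] [DecidableEq ι]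
    (ρ ρhat : ι → ℝ) (W : ι → ι → ℝ) (B : ι → ι → ℝ)
    (hB : ∀ i j, B i j = ρhat i - ρhat j + W i j)
    (hWsymm : ∀ i j, W i j = W j i) (hWpos : ∀ i j, 0 ≤ W i j)
    (hE : ∀ i j, ρ i - ρ j ∈ Set.Icc (-(B j i)) (B i j))
    (S : Finset ι) (ρm ρm1 : ℝ)
    (hρm : ∀ a ∈ S, ρm ≤ ρ a) (hρm1 : ∀ a ∉ S, ρ a ≤ ρm1) (hmm1 : ρm1 ≤ ρm)
    (b s : ι) (hb : b ∉ S) (hs : s ∉ S)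
    (hBW : B s b ≤ W b s)
    (hch : ∃ b' ∈ S, B b' b ≤ B s b) :
    ρm - ρ b ≤ B s b ∧
    B s b ≤ -(max (ρm - ρ b) (ρm - ρ s)) + 3 * W b s := by
  obtain ⟨b', hb', hle⟩ := hch
  have h1 : ρ b' - ρ b ≤ B b' b := (hE b' b).2
  have hρb' := hρm b' hb'
  have hpart1 : ρm - ρ b ≤ B s b := by linarith
  refine ⟨hpart1, ?_⟩
  have h2 : ρ b - ρ s ≤ B b s := (hE b s).2
  have hsum : B s b + B b s = 2 * W b s := by
    rw [hB, hB, hWsymm s b]; ring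
  have hW := hWpos b s
  have hmax : max (ρm - ρ b) (ρm - ρ s) ≤ 3 * W b s - B s b :=
    max_le (by linarith) (by linarith)
  linarith
end

section
/- Case (iv) of Lemma 1: under event E with symmetric nonnegative W_t, suppose b_t ∈ S*_m, s_t ∈ S*_m, B_t(s_t,b_t) ≤ W_t(b_t,s_t), and there exists s ∉ S*_m with B_t(s_t,b_t) ≥ B_t(s_t,s). Then B_t(s_t,b_t) ≥ Δ(s_t) and B_t(s_t, b_t) ≤ −max(Δ(b_t), Δ(s_t)) + 3 W_t(b_t, s_t), where Δ(a) = ρ(a) − ρ_(m+1) for a ∈ S*_m. -/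
/-- Case (iv) of Lemma 1: b_t ∈ S*_m and s_t ∈ S*_m. -/
theorem stmt_10 {ι : Type*} [Fintype ι] [DecidableEq ι]
    (ρ ρhat : ι → ℝ) (W : ι → ι → ℝ) (B : ι → ι → ℝ)
    (hB : ∀ i j, B i j = ρhat i - ρhat j + W i j)
    (hWsymm : ∀ i j, W i j = W j i) (hWpos : ∀ i j, 0 ≤ W i j)
    (hE : ∀ i j, ρ i - ρ j ∈ Set.Icc (-(B j i)) (B i j))
    (S : Finset ι) (ρm ρm1 : ℝ)
    (hρm : ∀ a ∈ S, ρm ≤ ρ a) (hρm1 : ∀ a ∉ S, ρ a ≤ ρm1) (hmm1 : ρm1 ≤ ρm)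
    (b s : ι) (hb : b ∈ S) (hs : s ∈ S)
    (hBW : B s b ≤ W b s)
    (hch : ∃ s' ∉ S, B s s' ≤ B s b) :
    ρ s - ρm1 ≤ B s b ∧
    B s b ≤ -(max (ρ b - ρm1) (ρ s - ρm1)) + 3 * W b s := by
  obtain ⟨s', hs', hss'⟩ := hch
  have h1 := (hE s s').2
  have h2 := hρm1 s' hs'
  have part1 : ρ s - ρm1 ≤ B s b := by linarith
  have hbs := (hE b s).2
  have hsum : B s b + B b s = 2 * W b s := by
    rw [hB s b, hB b s, hWsymm s b]; ring
  refine ⟨part1, ?_⟩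
  have hmax : max (ρ b - ρm1) (ρ s - ρm1) ≤ 3 * W b s - B s b :=
    max_le (by linarith) (by linarith [hWpos b s])
  linarith
end

section
/- Combining the four cases: under event E with symmetric nonnegative W_t, assuming (a) ρ̂_t(b_t) ≥ ρ̂_t(s_t), (b) if b_t, s_t ∉ S*_m then some b ∈ S*_m satisfies B_t(s_t,b_t) ≥ B_t(b,b_t), and (c) if b_t, s_t ∈ S*_m then some s ∉ S*_m satisfies B_t(s_t,b_t) ≥ B_t(s_t,s), the bound B_t(s_t,b_t) ≤ min(−max(Δ(b_t),Δ(s_t)) + 2W_t(b_t,s_t), 0) + W_t(b_t,s_t) holds. -/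
/-- Lemma 1 in full: combining the four cases,
B_t(s_t,b_t) ≤ min(−max(Δ(b_t),Δ(s_t)) + 2W_t(b_t,s_t), 0) + W_t(b_t,s_t). -/
theorem stmt_19 {ι : Type*} [Fintype ι] [DecidableEq ι]
    (ρ ρhat : ι → ℝ) (W : ι → ι → ℝ) (B : ι → ι → ℝ)
    (hB : ∀ i j, B i j = ρhat i - ρhat j + W i j)
    (hWsymm : ∀ i j, W i j = W j i) (hWpos : ∀ i j, 0 ≤ W i j)
    (hE : ∀ i j, ρ i - ρ j ∈ Set.Icc (-(B j i)) (B i j))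
    (S : Finset ι) (ρm ρm1 : ℝ)
    (hρm : ∀ a ∈ S, ρm ≤ ρ a) (hρm1 : ∀ a ∉ S, ρ a ≤ ρm1) (hmm1 : ρm1 ≤ ρm)
    (Δ : ι → ℝ) (hΔ : ∀ a, Δ a = if a ∈ S then ρ a - ρm1 else ρm - ρ a)
    (b s : ι)
    (hhat : ρhat s ≤ ρhat b)
    (hcase3 : b ∉ S → s ∉ S → ∃ b' ∈ S, B b' b ≤ B s b)
    (hcase4 : b ∈ S → s ∈ S → ∃ s' ∉ S, B s s' ≤ B s b) :
    B s b ≤ min (-(max (Δ b) (Δ s)) + 2 * W b s) 0 + W b s := by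
  have hBsb : B s b = ρhat s - ρhat b + W b s := by rw [hB, hWsymm s b]
  have hbw : B s b ≤ W b s := by linarith
  have key : ∀ i j : ι, ρ i - ρ j ≤ ρhat i - ρhat j + W i j := by
    intro i j
    have h := (hE i j).2
    rwa [hB] at h
  have hpos := hWpos b s
  have hkbs := key b s
  have h12 : Δ b ≤ 3 * W b s - B s b ∧ Δ s ≤ 3 * W b s - B s b := by
    by_cases hb : b ∈ S <;> by_cases hs : s ∈ S
    · obtain ⟨s', hs', hle⟩ := hcase4 hb hs
      have e2 := (hE s s').2
      have hm1 := hρm1 s' hs'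
      rw [hΔ b, hΔ s, if_pos hb, if_pos hs]
      constructor <;> linarith
    · have hm1 := hρm1 s hs
      have hm := hρm b hb
      rw [hΔ b, hΔ s, if_pos hb, if_neg hs]
      constructor <;> linarith
    · have e2 := (hE s b).2
      have hm1 := hρm1 b hb
      have hm := hρm s hs
      rw [hΔ b, hΔ s, if_neg hb, if_pos hs]
      constructor <;> linarith
    · obtain ⟨b', hb', hle⟩ := hcase3 hb hs
      have e2 := (hE b' b).2
      have hm := hρm b' hb'
      rw [hΔ b, hΔ s, if_neg hb, if_neg hs]
      constructor <;> linarith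
  obtain ⟨h1, h2⟩ := h12
  have hmax : max (Δ b) (Δ s) ≤ 3 * W b s - B s b := max_le h1 h2
  rcases le_total (-(max (Δ b) (Δ s)) + 2 * W b s) 0 with h | h
  · rw [min_eq_left h]; linarith
  · rw [min_eq_right h]; linarith
end
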